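/- Let $S = K[x_1,\ldots,x_n]$ and let $I \subset S$ be an $\mathfrak{m}$-primary lexsegment ideal with $\dim_K (S/I)_1 \le 2$. Then $S/I$ has the strong Lefschetz property: there is a linear form $l$ such that multiplication by $l^k$ from $(S/I)_j$ to $(S/I)_{j+k}$ has maximal rank for all $j \ge 0$ and $k \ge 1$. -/

import Mathlib

open MvPolynomial

variable {K : Type*} [Field K] {n : ℕ}

/-- The total degree of an exponent vector. -/
def mdeg {n : ℕ} (m : Fin n →₀ ℕ) : ℕ := m.sum fun _ e => e

/-- `I` is a monomial ideal: it contains every monomial of each of its elements. -/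
def IsMonomialIdeal (I : Ideal (MvPolynomial (Fin n) K)) : Prop :=
  ∀ f ∈ I, ∀ m ∈ f.support, (monomial m (1 : K)) ∈ I

/-- `I` is stable: for every monomial `u ∈ I` with largest dividing variable `x_k`,
and every `i ≤ k`, the monomial `(x_i / x_k) * u` lies in `I`. -/
def IsStableIdeal (I : Ideal (MvPolynomial (Fin n) K)) : Prop :=
  ∀ m : Fin n →₀ ℕ, (monomial m (1 : K)) ∈ I →
    ∀ k i : Fin n, m k ≠ 0 → (∀ k', k < k' → m k' = 0) → i ≤ k →
      (monomial (m + Finsupp.single i 1 - Finsupp.single k 1) (1 : K)) ∈ I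

/-- `I` is strongly stable: for every monomial `u ∈ I`, every variable `x_k` dividing `u`
and every `i ≤ k`, the monomial `(x_i / x_k) * u` lies in `I`. -/
def IsStronglyStableIdeal (I : Ideal (MvPolynomial (Fin n) K)) : Prop :=
  ∀ m : Fin n →₀ ℕ, (monomial m (1 : K)) ∈ I →
    ∀ k i : Fin n, m k ≠ 0 → i ≤ k →
      (monomial (m + Finsupp.single i 1 - Finsupp.single k 1) (1 : K)) ∈ I

/-- `v <_lex u` for exponent vectors, lex order with `x_1 > x_2 > ⋯ > x_n`. -/
def lexLt {n : ℕ} (v u : Fin n →₀ ℕ) : Prop :=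
  ∃ i : Fin n, (∀ j < i, v j = u j) ∧ v i < u i

/-- `I` is a lexsegment ideal. -/
def IsLexsegmentIdeal (I : Ideal (MvPolynomial (Fin n) K)) : Prop :=
  IsMonomialIdeal I ∧
    ∀ u v : Fin n →₀ ℕ, (monomial u (1 : K)) ∈ I → mdeg v = mdeg u → lexLt u v →
      (monomial v (1 : K)) ∈ I

/-- The degree `j` piece of `S/I`, as the image of the degree `j` homogeneous polynomials. -/
noncomputable def Qpiece (I : Ideal (MvPolynomial (Fin n) K)) (j : ℕ) :
    Submodule K (MvPolynomial (Fin n) K ⧸ I) :=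
  (homogeneousSubmodule (Fin n) K j).map (Ideal.Quotient.mkₐ K I).toLinearMap

/-- Multiplication by `g` maps `(S/I)_j` injectively (to `(S/I)_{j'}`). -/
def QInj (I : Ideal (MvPolynomial (Fin n) K)) (g : MvPolynomial (Fin n) K)
    (j _j' : ℕ) : Prop :=
  ∀ f₁ ∈ Qpiece I j, ∀ f₂ ∈ Qpiece I j,
    Ideal.Quotient.mk I g * f₁ = Ideal.Quotient.mk I g * f₂ → f₁ = f₂

/-- Multiplication by `g` maps `(S/I)_j` onto `(S/I)_{j'}`. -/
def QSurj (I : Ideal (MvPolynomial (Fin n) K)) (g : MvPolynomial (Fin n) K)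
    (j j' : ℕ) : Prop :=
  ∀ h ∈ Qpiece I j', ∃ f ∈ Qpiece I j, Ideal.Quotient.mk I g * f = h

/-- Multiplication by `g` from `(S/I)_j` to `(S/I)_{j'}` has maximal rank. -/
def MulMaxRank (I : Ideal (MvPolynomial (Fin n) K)) (g : MvPolynomial (Fin n) K)
    (j j' : ℕ) : Prop :=
  QInj I g j j' ∨ QSurj I g j j'

/-!
The variables outside a lexsegment ideal form a final segment `x_i, …, x_n`, so when
`dim_K (S/I)_1 ≤ 2` every standard monomial is a monomial in `x_{n-1}, x_n` alone; among
those of one degree, a smaller `x_n`-exponent means lex-larger. Take `l = x_n`. If every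
standard monomial of degree `j + k` is divisible by `x_n^k`, multiplication by `x_n^k` is onto.
Otherwise some standard `w` of degree `j + k` has `x_n`-exponent below `k`; for every standard
`u` of degree `j` then `x_n^k u <_lex w`, so `x_n^k u ∈ I` would force `w ∈ I`, and
multiplication by `x_n^k` is injective.
-/

lemma mdeg_eq_degree (m : Fin n →₀ ℕ) : mdeg m = m.degree := rfl

lemma mdeg_eq_sum (m : Fin n →₀ ℕ) : mdeg m = ∑ i, m i :=
  Finsupp.sum_fintype _ _ fun _ => rfl

lemma mdeg_add (a b : Fin n →₀ ℕ) : mdeg (a + b) = mdeg a + mdeg b := by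
  simp [mdeg_eq_degree]

lemma mdeg_single (i : Fin n) (k : ℕ) : mdeg (Finsupp.single i k) = k := by
  simp [mdeg_eq_degree]

lemma lexLt_of_eq_off_pair {a b : Fin n} {v w : Fin n →₀ ℕ} (hab : a ≤ b)
    (hoff : ∀ i, i ≠ a → i ≠ b → v i = w i) (hdeg : mdeg v = mdeg w) (hlt : w b < v b) :
    lexLt v w := by
  have hsplit (u : Fin n →₀ ℕ) :
      mdeg u = ∑ i ∈ {a, b}, u i + ∑ i ∈ ({a, b} : Finset (Fin n))ᶜ, u i := by
    rw [mdeg_eq_sum, Finset.sum_add_sum_compl]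
  have hrest :
      ∑ i ∈ ({a, b} : Finset (Fin n))ᶜ, v i = ∑ i ∈ ({a, b} : Finset (Fin n))ᶜ, w i :=
    Finset.sum_congr rfl fun i hi => by
      simp only [Finset.mem_compl, Finset.mem_insert, Finset.mem_singleton, not_or] at hi
      exact hoff i hi.1 hi.2
  have hv := hsplit v
  have hw := hsplit w
  rcases hab.lt_or_eq with hab | rfl
  · rw [Finset.sum_pair hab.ne] at hv hw
    exact ⟨a, fun i hi => hoff i hi.ne (hi.trans hab).ne, by omega⟩
  · simp only [Finset.mem_singleton, Finset.insert_eq_of_mem, Finset.sum_singleton] at hv hw hrest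
    omega

lemma MvPolynomial.mem_of_forall_monomial_mem {σ R : Type*} [CommSemiring R]
    {I : Ideal (MvPolynomial σ R)} {p : MvPolynomial σ R}
    (h : ∀ u ∈ p.support, monomial u (1 : R) ∈ I) : p ∈ I := by
  rw [p.as_sum]
  refine Ideal.sum_mem _ fun u hu => ?_
  rw [← mul_one (coeff u p), ← C_mul_monomial]
  exact I.mul_mem_left _ (h u hu)

lemma MvPolynomial.monomial_mem_of_le {σ R : Type*} [CommSemiring R]
    {I : Ideal (MvPolynomial σ R)} {u m : σ →₀ ℕ} (hum : u ≤ m)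
    (hu : monomial u (1 : R) ∈ I) : monomial m (1 : R) ∈ I := by
  rw [← add_tsub_cancel_of_le hum, ← one_mul (1 : R), ← monomial_mul]
  exact I.mul_mem_right _ hu

section

variable {I : Ideal (MvPolynomial (Fin n) K)}

lemma mk_mem_qpiece {j : ℕ} {p : MvPolynomial (Fin n) K} (hp : p.IsHomogeneous j) :
    Ideal.Quotient.mk I p ∈ Qpiece I j :=
  Submodule.mem_map_of_mem hp

lemma qpiece_eq_span (j : ℕ) :
    Qpiece I j = Submodule.span K
      ((fun u => Ideal.Quotient.mk I (monomial u (1 : K))) '' {u | mdeg u = j}) := by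
  rw [Qpiece, homogeneousSubmodule_eq_finsupp_supported,
    AddMonoidAlgebra.supported_eq_span_single, Submodule.map_span, Set.image_image]
  rfl

instance (j : ℕ) : Module.Finite K (Qpiece I j) :=
  Module.Finite.iff_fg.mpr ((homogeneousSubmodule_fg _ _ j).map _)

lemma IsMonomialIdeal.linearIndependent_mk_X (hI : IsMonomialIdeal I) (s : Finset (Fin n))
    (hs : ∀ i ∈ s, X i ∉ I) :
    LinearIndependent K fun i : s => Ideal.Quotient.mk I (X (i : Fin n)) := by
  rw [Fintype.linearIndependent_iff]
  intro g hg i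
  by_contra hgi
  set p : MvPolynomial (Fin n) K := ∑ t : s, g t • X (t : Fin n)
  have hp : p ∈ I := by
    rw [← Ideal.Quotient.eq_zero_iff_mem, ← Ideal.Quotient.mkₐ_eq_mk K]
    simpa [p, map_sum, map_smul] using hg
  have hcoeff : coeff (Finsupp.single (i : Fin n) 1) p = g i := by
    simp only [p, coeff_sum, coeff_smul, coeff_X, Finsupp.single_left_inj one_ne_zero,
      smul_eq_mul, mul_ite, mul_one, mul_zero, Subtype.coe_inj, Finset.sum_ite_eq',
      Finset.mem_univ, if_true]
  exact hs i i.2 (hI p hp _ (by rwa [mem_support_iff, hcoeff]))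

lemma IsMonomialIdeal.card_le_finrank_qpiece_one (hI : IsMonomialIdeal I) (s : Finset (Fin n))
    (hs : ∀ i ∈ s, X i ∉ I) :
    s.card ≤ Module.finrank K (Qpiece I 1) := by
  let v (i : s) : Qpiece I 1 := ⟨_, mk_mem_qpiece (isHomogeneous_X K (i : Fin n))⟩
  have hv : LinearIndependent K v :=
    .of_comp (Qpiece I 1).subtype (hI.linearIndependent_mk_X s hs)
  simpa using hv.fintype_card_le_finrank

lemma IsMonomialIdeal.mem_of_monomial_mul_mem (hI : IsMonomialIdeal I) {s : Fin n →₀ ℕ}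
    {p : MvPolynomial (Fin n) K}
    (h : ∀ u ∈ p.support, monomial (s + u) (1 : K) ∈ I → monomial u (1 : K) ∈ I)
    (hp : monomial s 1 * p ∈ I) : p ∈ I :=
  mem_of_forall_monomial_mem fun u hu =>
    h u hu (hI _ hp _ (by rwa [mem_support_iff, coeff_monomial_mul, one_mul, ← mem_support_iff]))

lemma IsLexsegmentIdeal.X_notMem_of_le (hI : IsLexsegmentIdeal I) {i c : Fin n} (hic : i ≤ c)
    (hi : X i ∉ I) : X c ∉ I := by
  rcases hic.lt_or_eq with hic | rfl
  · refine fun hc => hi (hI.2 _ _ hc (by rw [mdeg_single, mdeg_single]) ⟨i, fun j hj => ?_, ?_⟩)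
    · simp [hj.ne', (hj.trans hic).ne']
    · simp [hic.ne]
  · exact hi

lemma IsLexsegmentIdeal.eq_zero_of_monomial_notMem (hI : IsLexsegmentIdeal I)
    (hdim : Module.finrank K (Qpiece I 1) ≤ 2) {m : Fin n →₀ ℕ} (hm : monomial m (1 : K) ∉ I)
    {i : Fin n} (hi : (i : ℕ) + 2 < n) : m i = 0 := by
  by_contra hmi
  have hXi : X i ∉ I := fun h =>
    hm (monomial_mem_of_le (Finsupp.single_le_iff.mpr (Nat.one_le_iff_ne_zero.mpr hmi)) h)
  have := hI.1.card_le_finrank_qpiece_one (Finset.Ici i) fun c hc =>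
    hI.X_notMem_of_le (Finset.mem_Ici.mp hc) hXi
  rw [Fin.card_Ici] at this
  omega

lemma IsLexsegmentIdeal.monomial_mem_of_single_add_mem (hI : IsLexsegmentIdeal I)
    (hdim : Module.finrank K (Qpiece I 1) ≤ 2) {b : Fin n} (hb : (b : ℕ) + 1 = n)
    {w u : Fin n →₀ ℕ} {k : ℕ} (hw : monomial w (1 : K) ∉ I) (hwb : w b < k)
    (hdeg : mdeg w = k + mdeg u) (hu : monomial (Finsupp.single b k + u) (1 : K) ∈ I) :
    monomial u (1 : K) ∈ I := by
  by_contra hu'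
  have hab : (⟨n - 2, by omega⟩ : Fin n) ≤ b := Fin.mk_le_of_le_val (by omega)
  refine hw (hI.2 _ _ hu (by rw [hdeg, mdeg_add, mdeg_single]) (lexLt_of_eq_off_pair hab ?_ ?_ ?_))
  · intro i hia hib
    have hi : (i : ℕ) + 2 < n := by
      simp only [ne_eq, Fin.ext_iff] at hia hib
      omega
    rw [Finsupp.add_apply, Finsupp.single_eq_of_ne hib, hI.eq_zero_of_monomial_notMem hdim hu' hi,
      hI.eq_zero_of_monomial_notMem hdim hw hi]
  · rw [hdeg, mdeg_add, mdeg_single]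
  · simp only [Finsupp.add_apply, Finsupp.single_eq_same]
    omega

lemma IsLexsegmentIdeal.mem_of_X_pow_mul_mem (hI : IsLexsegmentIdeal I)
    (hdim : Module.finrank K (Qpiece I 1) ≤ 2) {b : Fin n} (hb : (b : ℕ) + 1 = n)
    {w : Fin n →₀ ℕ} {j k : ℕ} (hw : monomial w (1 : K) ∉ I) (hwdeg : mdeg w = j + k)
    (hwb : w b < k) {p : MvPolynomial (Fin n) K} (hp : p ∈ homogeneousSubmodule (Fin n) K j)
    (hpI : X b ^ k * p ∈ I) : p ∈ I := by
  rw [X_pow_eq_monomial] at hpI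
  refine hI.1.mem_of_monomial_mul_mem (fun u hu huI => ?_) hpI
  have hu : mdeg u = j := by
    rw [mdeg_eq_degree, Finsupp.degree_eq_weight_one]
    exact hp (mem_support_iff.mp hu)
  exact hI.monomial_mem_of_single_add_mem hdim hb hw hwb (by omega) huI

lemma qInj_of_mul_mem {g : MvPolynomial (Fin n) K} {j j' : ℕ}
    (h : ∀ p ∈ homogeneousSubmodule (Fin n) K j, g * p ∈ I → p ∈ I) :
    QInj I g j j' := by
  rintro _ ⟨p₁, hp₁, rfl⟩ _ ⟨p₂, hp₂, rfl⟩ heq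
  simp only [AlgHom.toLinearMap_apply, Ideal.Quotient.mkₐ_eq_mk, ← map_mul,
    Ideal.Quotient.eq] at heq ⊢
  exact h _ (Submodule.sub_mem _ hp₁ hp₂) (by rwa [mul_sub])

lemma qSurj_X_pow {b : Fin n} {j k : ℕ}
    (h : ∀ u, mdeg u = j + k → monomial u (1 : K) ∉ I → k ≤ u b) :
    QSurj I (X b ^ k) j (j + k) := by
  suffices Qpiece I (j + k) ≤
      (Qpiece I j).map (LinearMap.mulLeft K (Ideal.Quotient.mk I (X b ^ k))) from
    fun f hf => Submodule.mem_map.mp (this hf)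
  rw [qpiece_eq_span, Submodule.span_le]
  rintro _ ⟨u, hu, rfl⟩
  simp only [SetLike.mem_coe]
  by_cases huI : monomial u (1 : K) ∈ I
  · rw [Ideal.Quotient.eq_zero_iff_mem.mpr huI]
    exact zero_mem _
  · have hle : Finsupp.single b k ≤ u := Finsupp.single_le_iff.mpr (h u hu huI)
    refine ⟨_, mk_mem_qpiece (isHomogeneous_monomial (d := u - Finsupp.single b k) 1 ?_), ?_⟩
    · have := congrArg mdeg (tsub_add_cancel_of_le hle)
      rw [mdeg_add, mdeg_single, Set.mem_ofPred_eq.mp hu] at this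
      rw [← mdeg_eq_degree]
      omega
    · rw [LinearMap.mulLeft_apply, ← map_mul, X_pow_eq_monomial, monomial_mul, one_mul,
        add_tsub_cancel_of_le hle]

end

theorem stmt_15_general (hn : 1 ≤ n) (I : Ideal (MvPolynomial (Fin n) K))
    (hlex : IsLexsegmentIdeal I)
    (hdim : Module.finrank K (Qpiece I 1) ≤ 2) :
    ∃ l ∈ homogeneousSubmodule (Fin n) K 1,
      ∀ j k : ℕ, 1 ≤ k → MulMaxRank I (l ^ k) j (j + k) := by
  set b : Fin n := ⟨n - 1, by omega⟩
  refine ⟨X b, isHomogeneous_X K b, fun j k _ => ?_⟩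
  by_cases h : ∀ u, mdeg u = j + k → monomial u (1 : K) ∉ I → k ≤ u b
  · exact .inr (qSurj_X_pow h)
  · push Not at h
    obtain ⟨w, hwdeg, hwI, hwb⟩ := h
    exact .inl (qInj_of_mul_mem fun p hp =>
      hlex.mem_of_X_pow_mul_mem hdim (b := b) (by simp only [b]; omega) hwI hwdeg hwb hp)

/-- An `𝔪`-primary lexsegment ideal `I` with `dim_K (S/I)_1 ≤ 2` has the strong
Lefschetz property: there is a linear form `l` such that multiplication by `l^k` from
`(S/I)_j` to `(S/I)_{j+k}` has maximal rank for all `j ≥ 0`, `k ≥ 1`. -/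
theorem stmt_15 [Infinite K] (hn : 1 ≤ n) (I : Ideal (MvPolynomial (Fin n) K))
    (hlex : IsLexsegmentIdeal I)
    (hfd : FiniteDimensional K (MvPolynomial (Fin n) K ⧸ I))
    (hdim : Module.finrank K (Qpiece I 1) ≤ 2) :
    ∃ l ∈ homogeneousSubmodule (Fin n) K 1,
      ∀ j k : ℕ, 1 ≤ k → MulMaxRank I (l ^ k) j (j + k) :=
  stmt_15_general hn I hlex hdim
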